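/- arXiv:1806.07290 — 2 statements merged into one kernel-verified Lean document; each statement's English description precedes it below -/
import Mathlib

section
/- If x ∈ Q2^π with pointwise limit q of the sums q_n, then x ∈ Q0^π and [x]_π = q; that is, the discrete measures μ_n := ∑_i (x(t^n_{i+1}) − x(t^n_i))² δ_{t^n_i} converge vaguely on [0,∞) to the Lebesgue–Stieltjes measure μ of q (characterized by μ([0,t]) = q(t)), and t ↦ μ([0,t]) − ∑_{0<s≤t} (Δx(s))² is continuous and nondecreasing. -/
/-!
The sums `q_n` are the distribution functions of the discrete measures
`μ_n = ∑_i (x(t^n_{i+1}) - x(t^n_i))² δ_{t^n_i}`, so `μ_n((a,b]) = q_n(b) - q_n(a)` converges to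
`μ((a,b])` for the Stieltjes measure `μ` of `q` extended by `0` to the negative axis; `q` is
right-continuous, being a continuous function plus the right-continuous sum of squared jumps.
Convergence on half-open intervals gives vague convergence: on a fine enough grid, a compactly
supported continuous `f` is uniformly close to a step function over such intervals, with an error
controlled by the masses `μ_n((-R,R])`, which stay bounded because they converge.
-/

open Filter Topology MeasureTheory

noncomputable section

/-- A sequence of partitions `π_n = (0 = t^n_0 < t^n_1 < ... < t^n_{k_n})` of `[0,∞)`,
with last point tending to `∞` and mesh tending to `0` uniformly on compact sets. -/
structure PartitionSeq where
  t : ℕ → ℕ → ℝ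
  k : ℕ → ℕ
  zero : ∀ n, t n 0 = 0
  strict : ∀ n, ∀ i < k n, t n i < t n (i + 1)
  tendsto_top : Tendsto (fun n => t n (k n)) atTop atTop
  mesh : ∀ T > (0 : ℝ), ∀ ε > (0 : ℝ), ∃ N, ∀ n ≥ N, ∀ i < k n,
      t n (i + 1) ≤ T → t n (i + 1) - t n i < ε

/-- `q_n(u) = ∑_{i : t^n_i ≤ u} (x(t^n_{i+1}) - x(t^n_i))²`. -/
def qSum (P : PartitionSeq) (x : ℝ → ℝ) (n : ℕ) (u : ℝ) : ℝ :=
  ∑ i ∈ (Finset.range (P.k n)).filter fun i => P.t n i ≤ u,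
    (x (P.t n (i + 1)) - x (P.t n i)) ^ 2

/-- Left limit `q_n(u-) = ∑_{i : t^n_i < u} (x(t^n_{i+1}) - x(t^n_i))²`. -/
def qSumLt (P : PartitionSeq) (x : ℝ → ℝ) (n : ℕ) (u : ℝ) : ℝ :=
  ∑ i ∈ (Finset.range (P.k n)).filter fun i => P.t n i < u,
    (x (P.t n (i + 1)) - x (P.t n i)) ^ 2

/-- `s_n(u) = ∑_i (x(t^n_{i+1} ∧ u) - x(t^n_i ∧ u))²`. -/
def sSum (P : PartitionSeq) (x : ℝ → ℝ) (n : ℕ) (u : ℝ) : ℝ :=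
  ∑ i ∈ Finset.range (P.k n),
    (x (min (P.t n (i + 1)) u) - x (min (P.t n i) u)) ^ 2

/-- `x` is càdlàg on `[0,∞)`: right-continuous at every `t ≥ 0` and
with a left limit at every `t > 0`. -/
def IsCadlag (x : ℝ → ℝ) : Prop :=
  (∀ t : ℝ, 0 ≤ t → Tendsto x (nhdsWithin t (Set.Ici t)) (nhds (x t))) ∧
  (∀ t : ℝ, 0 < t → ∃ l : ℝ, Tendsto x (nhdsWithin t (Set.Iio t)) (nhds l))

/-- The jump `Δx(t) = x(t) - x(t-)` (with `Δx(t) = 0` for `t ≤ 0`). -/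
def jump (x : ℝ → ℝ) (s : ℝ) : ℝ :=
  if 0 < s then x s - Function.leftLim x s else 0

/-- `∑_{0 < s ≤ t} (Δx(s))²`. -/
def jumpSumSq (x : ℝ → ℝ) (t : ℝ) : ℝ :=
  ∑' s : Set.Ioc (0 : ℝ) t, (jump x s) ^ 2

/-- Vague convergence on `[0,∞)` of the discrete measures
`μ_n = ∑_i (x(t^n_{i+1}) - x(t^n_i))² δ_{t^n_i}` to `μ`: the integrals of every
continuous compactly supported test function converge. -/
def VagueTo (P : PartitionSeq) (x : ℝ → ℝ) (μ : Measure ℝ) : Prop :=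
  ∀ f : ℝ → ℝ, Continuous f → HasCompactSupport f →
    Tendsto (fun n => ∑ i ∈ Finset.range (P.k n),
        (x (P.t n (i + 1)) - x (P.t n i)) ^ 2 * f (P.t n i))
      atTop (nhds (∫ s, f s ∂μ))

/-- The Lebesgue decomposition property: `q(t) - ∑_{0<s≤t} (Δx(s))²` is a
continuous nondecreasing function on `[0,∞)` (the jumps being square-summable). -/
def JumpDecomp (x : ℝ → ℝ) (q : ℝ → ℝ) : Prop :=
  (∀ t : ℝ, 0 ≤ t → Summable fun s : Set.Ioc (0 : ℝ) t => (jump x s) ^ 2) ∧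
  ContinuousOn (fun t => q t - jumpSumSq x t) (Set.Ici 0) ∧
  MonotoneOn (fun t => q t - jumpSumSq x t) (Set.Ici 0)

/-- `μ` witnesses that `x ∈ Q0^π`: `μ` is a locally finite (Radon) measure on `[0,∞)`,
the discrete measures `μ_n` converge vaguely to `μ`, and
`t ↦ μ([0,t]) - ∑_{0<s≤t}(Δx(s))²` is continuous and nondecreasing. -/
def Q0Data (P : PartitionSeq) (x : ℝ → ℝ) (μ : Measure ℝ) : Prop :=
  IsLocallyFiniteMeasure μ ∧ μ (Set.Iio 0) = 0 ∧ VagueTo P x μ ∧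
  JumpDecomp x fun t => (μ (Set.Icc 0 t)).toReal

/-- `x ∈ Q0^π`: `x` has quadratic variation along `π` in the sense of Föllmer. -/
def MemQ0 (P : PartitionSeq) (x : ℝ → ℝ) : Prop :=
  IsCadlag x ∧ ∃ μ : Measure ℝ, Q0Data P x μ

open Set

lemma abs_setIntegral_sub_mul_measureReal_le {α : Type*} [MeasurableSpace α] {μ : Measure α}
    {s : Set α} (hs : μ s < ⊤) {f : α → ℝ} (hf : IntegrableOn f s μ) {c : α} {ε : ℝ}
    (hε : ∀ u ∈ s, |f u - f c| ≤ ε) :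
    |∫ u in s, f u ∂μ - f c * μ.real s| ≤ ε * μ.real s := by
  rw [mul_comm, ← smul_eq_mul, ← setIntegral_const, ← integral_sub hf (integrableOn_const hs.ne)]
  simpa only [Real.norm_eq_abs] using
    norm_setIntegral_le_of_norm_le_const (f := fun u => f u - f c) hs
      (by simpa only [Real.norm_eq_abs])

lemma sum_measureReal_Ioc_of_monotone {μ : Measure ℝ} [IsLocallyFiniteMeasure μ] {p : ℕ → ℝ}
    (hp : Monotone p) (m : ℕ) :
    ∑ j ∈ Finset.range m, μ.real (Ioc (p j) (p (j + 1))) = μ.real (Ioc (p 0) (p m)) := by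
  induction m with
  | zero => simp
  | succ m ih =>
    rw [Finset.sum_range_succ, ih, ← measureReal_union (Ioc_disjoint_Ioc_of_le le_rfl)
      measurableSet_Ioc measure_Ioc_lt_top.ne measure_Ioc_lt_top.ne,
      Ioc_union_Ioc_eq_Ioc (hp (Nat.zero_le m)) (hp m.le_succ)]

lemma abs_integral_sub_sum_Ioc_le {μ : Measure ℝ} [IsLocallyFiniteMeasure μ] {f : ℝ → ℝ}
    (hf : Integrable f μ) {p : ℕ → ℝ} (hp : Monotone p) {m : ℕ}
    (hsupp : ∀ u ∉ Ioc (p 0) (p m), f u = 0) {ε : ℝ}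
    (hε : ∀ j < m, ∀ u ∈ Ioc (p j) (p (j + 1)), |f u - f (p (j + 1))| ≤ ε) :
    |∫ u, f u ∂μ - ∑ j ∈ Finset.range m, f (p (j + 1)) * μ.real (Ioc (p j) (p (j + 1)))|
      ≤ ε * μ.real (Ioc (p 0) (p m)) := by
  have hpieces : ∫ u, f u ∂μ = ∑ j ∈ Finset.range m, ∫ u in Ioc (p j) (p (j + 1)), f u ∂μ := by
    rw [← setIntegral_eq_integral_of_forall_compl_eq_zero hsupp,
      ← intervalIntegral.integral_of_le (hp (Nat.zero_le m)),
      ← intervalIntegral.sum_integral_adjacent_intervals fun k _ => hf.intervalIntegrable]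
    exact Finset.sum_congr rfl fun j _ => intervalIntegral.integral_of_le (hp j.le_succ)
  rw [hpieces, ← sum_measureReal_Ioc_of_monotone hp, Finset.mul_sum, ← Finset.sum_sub_distrib]
  refine (Finset.abs_sum_le_sum_abs _ _).trans (Finset.sum_le_sum fun j hj => ?_)
  exact abs_setIntegral_sub_mul_measureReal_le measure_Ioc_lt_top hf.integrableOn
    (hε j (Finset.mem_range.mp hj))

lemma UniformContinuous.exists_grid {f : ℝ → ℝ} (hf : UniformContinuous f) {a b : ℝ}
    (hab : a ≤ b) {η : ℝ} (hη : 0 < η) :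
    ∃ (m : ℕ) (p : ℕ → ℝ), Monotone p ∧ p 0 = a ∧ p m = b ∧
      ∀ j < m, ∀ u ∈ Ioc (p j) (p (j + 1)), |f u - f (p (j + 1))| ≤ η := by
  obtain ⟨δ, hδ, hfδ⟩ := Metric.uniformContinuous_iff.mp hf η hη
  obtain ⟨m, hm⟩ := exists_nat_gt ((b - a) / δ)
  have hm0 : (0 : ℝ) < m := lt_of_le_of_lt (div_nonneg (sub_nonneg.mpr hab) hδ.le) hm
  have hmesh : (b - a) / m < δ := by
    rw [div_lt_iff₀ hm0]
    rw [div_lt_iff₀ hδ] at hm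
    linarith
  refine ⟨m, fun j => a + j * ((b - a) / m), fun i j hij => ?_, by simp, by field_simp; ring,
    fun j _ u hu => (hfδ ?_).le⟩
  · have : 0 ≤ (b - a) / m := div_nonneg (sub_nonneg.mpr hab) hm0.le
    dsimp only
    gcongr
  · dsimp only at hu ⊢
    push_cast at hu ⊢
    rw [Real.dist_eq, abs_sub_comm, abs_of_nonneg (by linarith [hu.2])]
    linarith [hu.1]

theorem tendsto_integral_of_tendsto_measureReal_Ioc {ν : ℕ → Measure ℝ} {μ : Measure ℝ}
    [∀ n, IsLocallyFiniteMeasure (ν n)] [IsLocallyFiniteMeasure μ]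
    (hν : ∀ a b, a ≤ b → Tendsto (fun n => (ν n).real (Ioc a b)) atTop (𝓝 (μ.real (Ioc a b))))
    {f : ℝ → ℝ} (hf : Continuous f) (hfc : HasCompactSupport f) :
    Tendsto (fun n => ∫ u, f u ∂ν n) atTop (𝓝 (∫ u, f u ∂μ)) := by
  obtain ⟨R, hR, hfR⟩ := hfc.exists_pos_le_norm
  have hsupp : ∀ u ∉ Ioc (-R) R, f u = 0 := fun u hu => hfR u <| by
    contrapose! hu
    rw [Real.norm_eq_abs, abs_lt] at hu
    exact ⟨hu.1, hu.2.le⟩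
  set C := μ.real (Ioc (-R) R) + 1
  have hC : 0 < C := by positivity
  rw [Metric.tendsto_atTop]
  intro ε hε
  set η := ε / (4 * C)
  obtain ⟨m, p, hp, hp0, hpm, hstep⟩ :=
    (hf.uniformContinuous_of_tendsto_cocompact hfc.is_zero_at_infty).exists_grid
      (neg_le_self hR.le) (show 0 < η by positivity)
  set S : Measure ℝ → ℝ := fun ρ =>
    ∑ j ∈ Finset.range m, f (p (j + 1)) * ρ.real (Ioc (p j) (p (j + 1)))
  have happrox : ∀ (ρ : Measure ℝ) [IsLocallyFiniteMeasure ρ],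
      |∫ u, f u ∂ρ - S ρ| ≤ η * ρ.real (Ioc (-R) R) := fun ρ _ => by
    rw [← hp0, ← hpm] at hsupp ⊢
    exact abs_integral_sub_sum_Ioc_le (hf.integrable_of_hasCompactSupport hfc) hp hsupp hstep
  have hS : Tendsto (fun n => S (ν n)) atTop (𝓝 (S μ)) :=
    tendsto_finsetSum _ fun j _ => (hν _ _ (hp j.le_succ)).const_mul _
  have hmass : ∀ᶠ n in atTop, (ν n).real (Ioc (-R) R) < C :=
    (hν _ _ (by linarith)).eventually_lt_const (lt_add_one _)
  have hclose : ∀ᶠ n in atTop, dist (S (ν n)) (S μ) < ε / 2 :=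
    Metric.tendsto_nhds.mp hS (ε / 2) (by positivity)
  obtain ⟨N, hN⟩ := eventually_atTop.mp (hmass.and hclose)
  refine ⟨N, fun n hn => ?_⟩
  obtain ⟨hmass_n, hclose_n⟩ := hN n hn
  rw [Real.dist_eq] at hclose_n ⊢
  have hηC : η * C = ε / 4 := by simp only [η]; field_simp
  have hν_err : |∫ u, f u ∂ν n - S (ν n)| ≤ ε / 4 :=
    (happrox (ν n)).trans (hηC ▸ by gcongr)
  have hμ_err : |S μ - ∫ u, f u ∂μ| ≤ ε / 4 := by
    rw [abs_sub_comm]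
    exact (happrox μ).trans (hηC ▸ by gcongr; linarith)
  calc |∫ u, f u ∂ν n - ∫ u, f u ∂μ|
      ≤ |∫ u, f u ∂ν n - S (ν n)| + |S (ν n) - S μ| + |S μ - ∫ u, f u ∂μ| := by
        linarith [abs_sub_le (∫ u, f u ∂ν n) (S (ν n)) (∫ u, f u ∂μ),
          abs_sub_le (S (ν n)) (S μ) (∫ u, f u ∂μ)]
    _ < ε := by linarith

lemma continuousWithinAt_tsum_indicator_Iic {g : ℝ → ℝ} {t c : ℝ} (htc : t < c)
    (hg : Summable ((Iic c).indicator g)) :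
    ContinuousWithinAt (fun u => ∑' s, (Iic u).indicator g s) (Ici t) t := by
  refine tendsto_tsum_of_dominated_convergence hg.abs (fun s => ?_) ?_
  · rcases le_or_gt s t with hst | hst
    · refine tendsto_const_nhds.congr' ?_
      filter_upwards [self_mem_nhdsWithin] with u (hu : t ≤ u)
      simp [indicator_of_mem (show s ∈ Iic t from hst),
        indicator_of_mem (show s ∈ Iic u from hst.trans hu)]
    · rw [indicator_of_notMem (show s ∉ Iic t from not_le.mpr hst)]
      refine tendsto_const_nhds.congr' ?_
      filter_upwards [nhdsWithin_le_nhds (Iio_mem_nhds hst)] with u (hu : u < s)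
      rw [indicator_of_notMem (show s ∉ Iic u from not_le.mpr hu)]
  · filter_upwards [nhdsWithin_le_nhds (Iio_mem_nhds htc)] with u (hu : u < c) s
    by_cases hs : s ≤ u
    · simp [indicator_of_mem (show s ∈ Iic u from hs),
        indicator_of_mem (show s ∈ Iic c from hs.trans hu.le)]
    · simp [indicator_of_notMem (show s ∉ Iic u from hs)]

lemma indicator_Ioc_jump_sq (x : ℝ → ℝ) (t : ℝ) :
    (Ioc 0 t).indicator (fun s => jump x s ^ 2) = (Iic t).indicator (fun s => jump x s ^ 2) := by
  ext s
  by_cases hs : 0 < s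
  · simp [indicator, hs]
  · simp [indicator, hs, jump]

lemma jumpSumSq_eq_tsum_indicator (x : ℝ → ℝ) (t : ℝ) :
    jumpSumSq x t = ∑' s, (Iic t).indicator (fun s => jump x s ^ 2) s := by
  rw [jumpSumSq, _root_.tsum_subtype (Ioc 0 t) fun s => jump x s ^ 2, indicator_Ioc_jump_sq]

namespace JumpDecomp

variable {x q : ℝ → ℝ}

lemma continuousWithinAt_Ici (hdec : JumpDecomp x q) {t : ℝ} (ht : 0 ≤ t) :
    ContinuousWithinAt q (Ici t) t := by
  have hsum : Summable ((Iic (t + 1)).indicator fun s => jump x s ^ 2) := by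
    rw [← indicator_Ioc_jump_sq, ← summable_subtype_iff_indicator]
    exact hdec.1 (t + 1) (by linarith)
  have hJ : ContinuousWithinAt (jumpSumSq x) (Ici t) t := by
    simp only [funext (jumpSumSq_eq_tsum_indicator x)]
    exact continuousWithinAt_tsum_indicator_Iic (lt_add_one t) hsum
  simpa only [Pi.add_def, sub_add_cancel] using
    ((hdec.2.1 t ht).mono (Ici_subset_Ici.mpr ht)).add hJ

lemma congr (hdec : JumpDecomp x q) {q' : ℝ → ℝ} (h : EqOn q q' (Ici 0)) : JumpDecomp x q' :=
  ⟨hdec.1, hdec.2.1.congr fun t ht => by simp [h ht],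
    hdec.2.2.congr fun t ht => by simp [h ht]⟩

end JumpDecomp

namespace StieltjesFunction

def indicatorIci (q : ℝ → ℝ) (hq0 : 0 ≤ q 0) (hmono : MonotoneOn q (Ici 0))
    (hrc : ∀ t, 0 ≤ t → ContinuousWithinAt q (Ici t) t) : StieltjesFunction ℝ where
  toFun := (Ici 0).indicator q
  mono' a b hab := by
    by_cases ha : 0 ≤ a
    · simpa [ha, ha.trans hab] using hmono ha (ha.trans hab) hab
    · by_cases hb : 0 ≤ b
      · simpa [ha, hb] using hq0.trans (hmono self_mem_Ici hb hb)
      · simp [indicator_of_notMem, ha, hb]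
  right_continuous' t := by
    rcases lt_or_ge t 0 with ht | ht
    · have : (fun _ => (0 : ℝ)) =ᶠ[𝓝 t] (Ici 0).indicator q := by
        filter_upwards [Iio_mem_nhds ht] with u hu using
          (indicator_of_notMem (not_le.mpr hu) q).symm
      exact (continuousAt_const.congr this).continuousWithinAt
    · exact (hrc t ht).congr (fun u hu => indicator_of_mem (mem_Ici.mpr (ht.trans hu)) q)
        (indicator_of_mem (mem_Ici.mpr ht) q)

lemma indicatorIci_apply {q : ℝ → ℝ} {hq0 : 0 ≤ q 0} {hmono : MonotoneOn q (Ici 0)}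
    {hrc : ∀ t, 0 ≤ t → ContinuousWithinAt q (Ici t) t} (u : ℝ) :
    indicatorIci q hq0 hmono hrc u = (Ici 0).indicator q u := rfl

variable (F : StieltjesFunction ℝ)

lemma measureReal_Ioc {a b : ℝ} (hab : a ≤ b) : F.measure.real (Ioc a b) = F b - F a := by
  rw [measureReal_def, measure_Ioc, ENNReal.toReal_ofReal (sub_nonneg.mpr (F.mono hab))]

variable {F}

lemma leftLim_zero_of_eq_zero (hF : ∀ u < 0, F u = 0) : Function.leftLim F 0 = 0 :=
  leftLim_eq_of_tendsto <| tendsto_const_nhds.congr' <| by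
    filter_upwards [self_mem_nhdsWithin] with u hu using (hF u hu).symm

lemma measure_Iio_zero_of_eq_zero (hF : ∀ u < 0, F u = 0) : F.measure (Iio 0) = 0 := by
  have hbot : Tendsto F atBot (𝓝 0) := tendsto_const_nhds.congr' <| by
    filter_upwards [eventually_lt_atBot 0] with u hu using (hF u hu).symm
  simp [F.measure_Iio hbot, leftLim_zero_of_eq_zero hF]

lemma measure_Icc_zero_of_eq_zero (hF : ∀ u < 0, F u = 0) (t : ℝ) :
    F.measure (Icc 0 t) = ENNReal.ofReal (F t) := by
  simp [F.measure_Icc, leftLim_zero_of_eq_zero hF]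

end StieltjesFunction

lemma PartitionSeq.t_nonneg (P : PartitionSeq) (n : ℕ) {i : ℕ} (hi : i ≤ P.k n) :
    0 ≤ P.t n i := by
  induction i with
  | zero => exact (P.zero n).ge
  | succ j ih => exact (ih (by omega)).trans (P.strict n j (by omega)).le

section QuadraticVariation

variable (P : PartitionSeq) (x : ℝ → ℝ) (n : ℕ)

lemma qSum_nonneg (u : ℝ) : 0 ≤ qSum P x n u :=
  Finset.sum_nonneg fun _ _ => sq_nonneg _

lemma qSum_mono : Monotone (qSum P x n) := fun _ _ hab =>
  Finset.sum_le_sum_of_subset_of_nonneg (Finset.monotone_filter_right _ fun _ _ h => h.trans hab)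
    fun _ _ _ => sq_nonneg _

lemma qSum_of_neg {u : ℝ} (hu : u < 0) : qSum P x n u = 0 :=
  Finset.sum_eq_zero fun i hi => by
    rw [Finset.mem_filter, Finset.mem_range] at hi
    exact absurd (hi.2.trans_lt hu) (not_lt.mpr (P.t_nonneg n hi.1.le))

def qvMeasure : Measure ℝ :=
  ∑ i ∈ Finset.range (P.k n),
    ENNReal.ofReal ((x (P.t n (i + 1)) - x (P.t n i)) ^ 2) • Measure.dirac (P.t n i)

instance : IsFiniteMeasure (qvMeasure P x n) :=
  ⟨by simp [qvMeasure, Measure.finsetSum_apply, ENNReal.sum_lt_top]⟩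

lemma integral_qvMeasure (f : ℝ → ℝ) :
    ∫ u, f u ∂qvMeasure P x n =
      ∑ i ∈ Finset.range (P.k n), (x (P.t n (i + 1)) - x (P.t n i)) ^ 2 * f (P.t n i) := by
  rw [qvMeasure, integral_finsetSum_measure fun i _ =>
    (integrable_dirac enorm_lt_top).smul_measure ENNReal.ofReal_ne_top]
  simp [integral_smul_measure, ENNReal.toReal_ofReal (sq_nonneg _)]

lemma qvMeasure_real_Ioc {a b : ℝ} (hab : a ≤ b) :
    (qvMeasure P x n).real (Ioc a b) = qSum P x n b - qSum P x n a := by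
  rw [measureReal_def, qvMeasure, Measure.finsetSum_apply,
    ENNReal.toReal_sum fun i _ => by simp [indicator_apply]; finiteness, qSum, qSum,
    Finset.sum_filter, Finset.sum_filter, ← Finset.sum_sub_distrib]
  refine Finset.sum_congr rfl fun i _ => ?_
  rcases le_or_gt (P.t n i) a with ha | ha
  · simp [ha, ha.trans hab]
  · by_cases hb : P.t n i ≤ b <;>
      simp [ha, not_le.mpr ha, hb, ENNReal.toReal_ofReal (sq_nonneg _)]

lemma tendsto_qSum_indicator {q : ℝ → ℝ}
    (hq : ∀ t, 0 ≤ t → Tendsto (fun n => qSum P x n t) atTop (𝓝 (q t))) (u : ℝ) :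
    Tendsto (fun n => qSum P x n u) atTop (𝓝 ((Ici 0).indicator q u)) := by
  rcases lt_or_ge u 0 with hu | hu
  · simpa only [qSum_of_neg P x _ hu, indicator_of_notMem (show u ∉ Ici 0 from not_le.mpr hu)]
      using tendsto_const_nhds
  · simpa only [indicator_of_mem (mem_Ici.mpr hu)] using hq u hu

end QuadraticVariation

theorem prop_2_6_general (P : PartitionSeq) (x : ℝ → ℝ) (q : ℝ → ℝ)
    (hq : ∀ t : ℝ, 0 ≤ t → Tendsto (fun n => qSum P x n t) atTop (nhds (q t)))
    (hdec : JumpDecomp x q) :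
    ∃ μ : Measure ℝ, Q0Data P x μ ∧ ∀ t : ℝ, 0 ≤ t → (μ (Set.Icc 0 t)).toReal = q t := by
  have hq_nonneg : ∀ t, 0 ≤ t → 0 ≤ q t := fun t ht =>
    ge_of_tendsto' (hq t ht) fun n => qSum_nonneg P x n t
  have hq_mono : MonotoneOn q (Ici 0) := fun a ha b hb hab =>
    le_of_tendsto_of_tendsto' (hq a ha) (hq b hb) fun n => qSum_mono P x n hab
  set F := StieltjesFunction.indicatorIci q (hq_nonneg 0 le_rfl) hq_mono
    fun t ht => hdec.continuousWithinAt_Ici ht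
  have hF : ∀ u < 0, F u = 0 := fun u hu => indicator_of_notMem (not_le.mpr hu) q
  have hIcc : ∀ t, 0 ≤ t → (F.measure (Icc 0 t)).toReal = q t := fun t ht => by
    rw [StieltjesFunction.measure_Icc_zero_of_eq_zero hF, StieltjesFunction.indicatorIci_apply,
      indicator_of_mem (mem_Ici.mpr ht), ENNReal.toReal_ofReal (hq_nonneg t ht)]
  refine ⟨F.measure, ⟨inferInstance, StieltjesFunction.measure_Iio_zero_of_eq_zero hF,
    fun f hf hfc => ?_, hdec.congr fun t ht => (hIcc t ht).symm⟩, hIcc⟩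
  simp only [← integral_qvMeasure]
  refine tendsto_integral_of_tendsto_measureReal_Ioc (fun a b hab => ?_) hf hfc
  simp only [qvMeasure_real_Ioc P x _ hab, F.measureReal_Ioc hab]
  exact (tendsto_qSum_indicator P x hq b).sub (tendsto_qSum_indicator P x hq a)

/-- **Proposition 2.6.** If `x ∈ Q2^π` with pointwise limit `q` of the sums `q_n`, then
`x ∈ Q0^π` and `[x]_π = q`: the discrete measures `μ_n` converge vaguely on `[0,∞)` to the
Lebesgue–Stieltjes measure `μ` of `q` (i.e. `μ([0,t]) = q(t)`), which is locally finite, and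
`t ↦ μ([0,t]) - ∑_{0<s≤t}(Δx(s))²` is continuous and nondecreasing. -/
theorem prop_2_6 (P : PartitionSeq) (x : ℝ → ℝ) (q : ℝ → ℝ)
    (hx : IsCadlag x)
    (hq : ∀ t : ℝ, 0 ≤ t → Tendsto (fun n => qSum P x n t) atTop (nhds (q t)))
    (hdec : JumpDecomp x q) :
    ∃ μ : Measure ℝ, Q0Data P x μ ∧ ∀ t : ℝ, 0 ≤ t → (μ (Set.Icc 0 t)).toReal = q t :=
  prop_2_6_general P x q hq hdec
end
end

section
/- Let t₀ > 0 be a point that belongs to no partition π_n, and let x := 1_{[t₀,∞)} be the indicator function of [t₀,∞). Then lim_n s_n(t₀) = lim_n q_n(t₀) = 1, whereas the sums with right endpoints, p_n(t) := ∑_{i : t^n_{i+1} ≤ t} (x(t^n_{i+1}) − x(t^n_i))², satisfy lim_n p_n(t₀) = 0. -/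
open Filter Topology MeasureTheory

noncomputable section

/-!
For `n` large the last point of `π_n` exceeds `t₀`, so `t₀` lies strictly inside exactly one
interval `(t^n_m, t^n_{m+1})`. The squared increment of `x = 1_{[t₀,∞)}` over `[t^n_i, t^n_{i+1}]`
is `1` if `t₀ ∈ (t^n_i, t^n_{i+1}]` and `0` otherwise, so each of the three sums equals `1` or `0`
according as it contains the index `m`: `s_n` and `q_n` do (`t^n_m ≤ t₀`), `p_n` does not
(`t^n_{m+1} > t₀`).
-/

open Finset

lemma exists_le_lt_succ_of_le_of_lt {α : Type*} [LinearOrder α] {f : ℕ → α} {u : α} {k : ℕ}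
    (h0 : f 0 ≤ u) (hk : u < f k) : ∃ m < k, f m ≤ u ∧ u < f (m + 1) := by
  induction k with
  | zero => exact absurd h0 hk.not_ge
  | succ k ih =>
    by_cases huk : u < f k
    · obtain ⟨m, hm, hfm⟩ := ih huk
      exact ⟨m, by omega, hfm⟩
    · exact ⟨k, k.lt_succ_self, not_lt.1 huk, hk⟩

lemma MonotoneOn.eq_of_mem_Ioc_of_mem_Ioc {α : Type*} [LinearOrder α] {f : ℕ → α} {u : α}
    {k i j : ℕ} (hf : MonotoneOn f (Set.Iic k)) (hi : i < k) (hj : j < k)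
    (hui : u ∈ Set.Ioc (f i) (f (i + 1))) (huj : u ∈ Set.Ioc (f j) (f (j + 1))) : i = j := by
  have disjoint {a b : ℕ} (hb : b < k) (hab : a < b) (hua : u ≤ f (a + 1)) (hub : f b < u) :
      False :=
    (hub.trans_le hua).not_ge (hf (Set.mem_Iic.2 (by omega)) (Set.mem_Iic.2 hb.le) hab)
  rcases lt_trichotomy i j with h | h | h
  · exact (disjoint hj h hui.2 huj.1).elim
  · exact h
  · exact (disjoint hi h huj.2 hui.1).elim

lemma sq_indicator_Ici_sub_indicator_Ici {a b u : ℝ} (hab : a ≤ b) :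
    ((Set.Ici u).indicator (fun _ => (1 : ℝ)) b - (Set.Ici u).indicator (fun _ => 1) a) ^ 2 =
      if u ∈ Set.Ioc a b then 1 else 0 := by
  by_cases hua : u ≤ a
  · have hub : u ≤ b := hua.trans hab
    simp [hua, hub]
  · by_cases hub : u ≤ b <;> simp [hua, hub, not_le.1 hua]

lemma indicator_Ici_min_self {u c s : ℝ} :
    (Set.Ici u).indicator (fun _ => c) (min s u) = (Set.Ici u).indicator (fun _ => c) s := by
  simp [Set.indicator_apply]

namespace PartitionSeq

variable (P : PartitionSeq) (n : ℕ)

lemma strictMonoOn_t : StrictMonoOn (P.t n) (Set.Iic (P.k n)) :=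
  strictMonoOn_Iic_of_lt_succ (P.strict n)

variable {P n}

lemma exists_mem_Ioo {u : ℝ} (hu0 : 0 < u) (hnot : ∀ i ≤ P.k n, P.t n i ≠ u)
    (hu : u < P.t n (P.k n)) : ∃ m < P.k n, u ∈ Set.Ioo (P.t n m) (P.t n (m + 1)) := by
  obtain ⟨m, hm, hmu, hum⟩ :=
    exists_le_lt_succ_of_le_of_lt (f := P.t n) (P.zero n ▸ hu0.le) hu
  exact ⟨m, hm, lt_of_le_of_ne hmu (hnot m hm.le), hum⟩

lemma sq_increment_indicator_Ici {u : ℝ} {m i : ℕ} (hm : m < P.k n)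
    (hum : u ∈ Set.Ioc (P.t n m) (P.t n (m + 1))) (hi : i < P.k n) :
    ((Set.Ici u).indicator (fun _ => (1 : ℝ)) (P.t n (i + 1)) -
        (Set.Ici u).indicator (fun _ => 1) (P.t n i)) ^ 2 = if i = m then 1 else 0 := by
  rw [sq_indicator_Ici_sub_indicator_Ici (P.strict n i hi).le]
  refine if_congr ⟨fun hui => ?_, fun him => him ▸ hum⟩ rfl rfl
  exact (P.strictMonoOn_t n).monotoneOn.eq_of_mem_Ioc_of_mem_Ioc hi hm hui hum

lemma sum_sq_increment_indicator_Ici {u : ℝ} {m : ℕ} (hm : m < P.k n)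
    (hum : u ∈ Set.Ioc (P.t n m) (P.t n (m + 1))) {s : Finset ℕ} (hs : s ⊆ range (P.k n)) :
    ∑ i ∈ s, ((Set.Ici u).indicator (fun _ => (1 : ℝ)) (P.t n (i + 1)) -
        (Set.Ici u).indicator (fun _ => 1) (P.t n i)) ^ 2 = if m ∈ s then 1 else 0 := by
  rw [← sum_ite_eq' s m fun _ => (1 : ℝ)]
  exact sum_congr rfl fun i hi => sq_increment_indicator_Ici hm hum (mem_range.1 (hs hi))

end PartitionSeq

lemma sSum_indicator_Ici (P : PartitionSeq) (n : ℕ) (u c : ℝ) :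
    sSum P ((Set.Ici u).indicator fun _ => c) n u =
      ∑ i ∈ range (P.k n), ((Set.Ici u).indicator (fun _ => c) (P.t n (i + 1)) -
        (Set.Ici u).indicator (fun _ => c) (P.t n i)) ^ 2 := by
  simp only [sSum, indicator_Ici_min_self]

/-- **Remark.** Let `t₀ > 0` belong to no partition `π_n` and let `x = 1_{[t₀,∞)}`.
Then `lim_n s_n(t₀) = lim_n q_n(t₀) = 1`, while the sums with right endpoints
`p_n(t₀) = ∑_{t^n_{i+1} ≤ t₀} (x(t^n_{i+1}) - x(t^n_i))²` satisfy `lim_n p_n(t₀) = 0`. -/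
theorem remark_right_endpoint_sums (P : PartitionSeq) (t₀ : ℝ) (ht₀ : 0 < t₀)
    (hnot : ∀ n, ∀ i ≤ P.k n, P.t n i ≠ t₀) :
    Tendsto (fun n => sSum P (Set.indicator (Set.Ici t₀) fun _ => (1 : ℝ)) n t₀)
        atTop (nhds 1) ∧
    Tendsto (fun n => qSum P (Set.indicator (Set.Ici t₀) fun _ => (1 : ℝ)) n t₀)
        atTop (nhds 1) ∧
    Tendsto (fun n => ∑ i ∈ (Finset.range (P.k n)).filter fun i => P.t n (i + 1) ≤ t₀,
          ((Set.indicator (Set.Ici t₀) fun _ => (1 : ℝ)) (P.t n (i + 1)) -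
            (Set.indicator (Set.Ici t₀) fun _ => (1 : ℝ)) (P.t n i)) ^ 2)
        atTop (nhds 0) := by
  have hev := P.tendsto_top.eventually_gt_atTop t₀
  refine ⟨tendsto_const_nhds.congr' ?_, tendsto_const_nhds.congr' ?_,
    tendsto_const_nhds.congr' ?_⟩ <;> filter_upwards [hev] with n hn <;>
  obtain ⟨m, hm, hum⟩ := P.exists_mem_Ioo ht₀ (hnot n) hn <;>
  have hsum (s : Finset ℕ) (hs : s ⊆ range (P.k n)) :=
    P.sum_sq_increment_indicator_Ici hm (Set.Ioo_subset_Ioc_self hum) hs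
  · rw [sSum_indicator_Ici, hsum _ subset_rfl, if_pos (mem_range.2 hm)]
  · rw [qSum, hsum _ (filter_subset _ _), if_pos (mem_filter.2 ⟨mem_range.2 hm, hum.1.le⟩)]
  · rw [hsum _ (filter_subset _ _), if_neg fun h => (mem_filter.1 h).2.not_gt hum.2]

end
end
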